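/- Let σ₀, q₀, ω₀, σ₁, ω₁, P and D be smooth real-valued functions on the open half-plane ℝ²₊; set η₀ = ρ² e^{σ₀}, ω̄₁ = ω₁/η₀² and r = √(ρ²+z²). Suppose: (i) ³Δσ₀ = -|∂ω₀|²/η₀² on ℝ²₊; (ii) ³Δσ₁ = e^{2(σ₀+q₀)} P + (2/η₀²)(σ₁ |∂ω₀|² - ∂ω₁·∂ω₀) on ℝ²₊; (iii) ³Δω₁ = e^{2(σ₀+q₀)} D + (4/ρ) ∂_ρ ω₁ + 2 ∂ω₁·∂σ₀ + 2 ∂ω₀·∂σ₁ on ℝ²₊; (iv) there are constants C₁, C₂, C₃ > 0 with |∂ω₀|²/η₀² ≤ C₁/r², e^{-2(σ₀+q₀)} |∂ω₀|²/η₀² ≤ C₂ and e^{-2(σ₀+q₀)} |∂σ₀|² ≤ C₃ pointwise. Let M, M̄ > 0 satisfy ∫_{ℝ²₊} ( σ₁²/r² + |∂η₀|² ω̄₁² + η₀² |∂ω̄₁|² + |∂σ₁|² + |∂ω₀|² ω̄₁² ) ρ dρ dz ≤ M and ∫_{ℝ²₊} ( e^{2(σ₀+q₀)} P² + (e^{2(σ₀+q₀)}/η₀²)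 D² ) ρ dρ dz ≤ M̄. Assume all integrands appearing below are integrable with respect to ρ dρ dz. Then there exists a constant C > 0, depending only on C₁, C₂, C₃, such that ∫_{ℝ²₊} ( (³Δσ₁)² + η₀² (⁷Δω̄₁)² ) e^{-2(σ₀+q₀)} ρ dρ dz ≤ C (M + M̄). -/

import Mathlib

open MeasureTheory Real

noncomputable section

/-- The open half-plane `{(ρ, z) : ρ > 0}`. -/
def halfPlane : Set (ℝ × ℝ) := {p | 0 < p.1}

/-- Partial derivative with respect to the first variable `ρ`. -/
noncomputable def pdρ (f : ℝ × ℝ → ℝ) (p : ℝ × ℝ) : ℝ := fderiv ℝ f p (1, 0)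

/-- Partial derivative with respect to the second variable `z`. -/
noncomputable def pdz (f : ℝ × ℝ → ℝ) (p : ℝ × ℝ) : ℝ := fderiv ℝ f p (0, 1)

/-- `|∂f|² = (∂_ρ f)² + (∂_z f)²`. -/
noncomputable def gradSq (f : ℝ × ℝ → ℝ) (p : ℝ × ℝ) : ℝ := (pdρ f p) ^ 2 + (pdz f p) ^ 2

/-- `∂f·∂g = ∂_ρ f ∂_ρ g + ∂_z f ∂_z g`. -/
noncomputable def gradDot (f g : ℝ × ℝ → ℝ) (p : ℝ × ℝ) : ℝ :=
  pdρ f p * pdρ g p + pdz f p * pdz g p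

/-- Flat 2-dimensional Laplacian `Δf = ∂²_ρ f + ∂²_z f`. -/
noncomputable def lap2 (f : ℝ × ℝ → ℝ) (p : ℝ × ℝ) : ℝ := pdρ (pdρ f) p + pdz (pdz f) p

/-- `³Δf = Δf + ∂_ρ f / ρ`. -/
noncomputable def lap3 (f : ℝ × ℝ → ℝ) (p : ℝ × ℝ) : ℝ := lap2 f p + pdρ f p / p.1

/-- `⁷Δf = Δf + 5 ∂_ρ f / ρ`. -/
noncomputable def lap7 (f : ℝ × ℝ → ℝ) (p : ℝ × ℝ) : ℝ := lap2 f p + 5 * pdρ f p / p.1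

/-- `η₀ = ρ² e^{σ₀}`. -/
noncomputable def eta (σ₀ : ℝ × ℝ → ℝ) : ℝ × ℝ → ℝ := fun p => p.1 ^ 2 * Real.exp (σ₀ p)

/-- `ω̄₁ = ω₁ / η₀²`. -/
noncomputable def omegaBar (η₀ ω₁ : ℝ × ℝ → ℝ) : ℝ × ℝ → ℝ := fun p => ω₁ p / (η₀ p) ^ 2

/-- Distance `r = √(ρ² + z²)` to the origin. -/
noncomputable def rr (p : ℝ × ℝ) : ℝ := Real.sqrt (p.1 ^ 2 + p.2 ^ 2)

lemma hp_isOpen : IsOpen halfPlane := isOpen_lt continuous_const continuous_fst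

abbrev SM (f : ℝ × ℝ → ℝ) : Prop := ContDiffOn ℝ (⊤ : ℕ∞) f halfPlane

lemma SM.dAt {f : ℝ × ℝ → ℝ} (hf : SM f) {p : ℝ × ℝ} (hp : p ∈ halfPlane) :
    DifferentiableAt ℝ f p :=
  (hf.contDiffAt (hp_isOpen.mem_nhds hp)).differentiableAt (by simp)

lemma SM.pd {f : ℝ × ℝ → ℝ} (hf : SM f) (v : ℝ × ℝ) :
    SM (fun q => fderiv ℝ f q v) :=
  (hf.fderiv_of_isOpen hp_isOpen (by simp)).clm_apply contDiffOn_const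

lemma pd_congr {f g : ℝ × ℝ → ℝ} (h : ∀ q ∈ halfPlane, f q = g q) {p : ℝ × ℝ}
    (hp : p ∈ halfPlane) : fderiv ℝ f p = fderiv ℝ g p :=
  Filter.EventuallyEq.fderiv_eq (Filter.eventuallyEq_of_mem (hp_isOpen.mem_nhds hp) h)

lemma pd_mul {f g : ℝ × ℝ → ℝ} {p v : ℝ × ℝ} (hf : DifferentiableAt ℝ f p)
    (hg : DifferentiableAt ℝ g p) :
    fderiv ℝ (fun q => f q * g q) p v
      = fderiv ℝ f p v * g p + f p * fderiv ℝ g p v := by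
  rw [fderiv_fun_mul hf hg]; simp; ring

lemma pd_add {f g : ℝ × ℝ → ℝ} {p v : ℝ × ℝ} (hf : DifferentiableAt ℝ f p)
    (hg : DifferentiableAt ℝ g p) :
    fderiv ℝ (fun q => f q + g q) p v = fderiv ℝ f p v + fderiv ℝ g p v := by
  rw [fderiv_fun_add hf hg]; simp

lemma pd_exp {f : ℝ × ℝ → ℝ} {p v : ℝ × ℝ} (hf : DifferentiableAt ℝ f p) :
    fderiv ℝ (fun q => Real.exp (f q)) p v = Real.exp (f p) * fderiv ℝ f p v := by
  have h : HasFDerivAt (fun q => Real.exp (f q)) (Real.exp (f p) • fderiv ℝ f p) p :=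
    (Real.hasDerivAt_exp (f p)).comp_hasFDerivAt p hf.hasFDerivAt
  rw [h.fderiv]; simp

lemma pd_sq_fst {p v : ℝ × ℝ} :
    fderiv ℝ (fun q : ℝ × ℝ => q.1 ^ 2) p v = 2 * p.1 * v.1 := by
  have h : HasFDerivAt (fun q : ℝ × ℝ => q.1 ^ 2)
      (((2 : ℕ) * p.1 ^ 1) • ContinuousLinearMap.fst ℝ ℝ ℝ) p :=
    (hasDerivAt_pow 2 p.1).comp_hasFDerivAt p hasFDerivAt_fst
  rw [h.fderiv]; simp

lemma pd_mul_on {F f g : ℝ × ℝ → ℝ} (hF : ∀ q ∈ halfPlane, F q = f q * g q)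
    (hf : SM f) (hg : SM g) :
    ∀ q ∈ halfPlane, ∀ v, fderiv ℝ F q v
      = fderiv ℝ f q v * g q + f q * fderiv ℝ g q v := by
  intro q hq v
  rw [pd_congr hF hq]
  exact pd_mul (hf.dAt hq) (hg.dAt hq)

lemma pd2_mul_on {F f g : ℝ × ℝ → ℝ} (hF : ∀ q ∈ halfPlane, F q = f q * g q)
    (hf : SM f) (hg : SM g) {p : ℝ × ℝ} (hp : p ∈ halfPlane) (v : ℝ × ℝ) :
    fderiv ℝ (fun q => fderiv ℝ F q v) p v
      = fderiv ℝ (fun q => fderiv ℝ f q v) p v * g p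
        + 2 * fderiv ℝ f p v * fderiv ℝ g p v
        + f p * fderiv ℝ (fun q => fderiv ℝ g q v) p v := by
  have h1 : ∀ q ∈ halfPlane, (fun q => fderiv ℝ F q v) q
      = (fun q => fderiv ℝ f q v * g q) q + (fun q => f q * fderiv ℝ g q v) q := by
    intro q hq; exact pd_mul_on hF hf hg q hq v
  rw [pd_congr h1 hp]
  have d1 : DifferentiableAt ℝ (fun q => fderiv ℝ f q v * g q) p :=
    ((hf.pd v).dAt hp).mul (hg.dAt hp)
  have d2 : DifferentiableAt ℝ (fun q => f q * fderiv ℝ g q v) p :=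
    (hf.dAt hp).mul ((hg.pd v).dAt hp)
  calc fderiv ℝ (fun q => fderiv ℝ f q v * g q + f q * fderiv ℝ g q v) p v
      = fderiv ℝ (fun q => fderiv ℝ f q v * g q) p v
        + fderiv ℝ (fun q => f q * fderiv ℝ g q v) p v := pd_add d1 d2
    _ = (fderiv ℝ (fun q => fderiv ℝ f q v) p v * g p
          + fderiv ℝ f p v * fderiv ℝ g p v)
        + (fderiv ℝ f p v * fderiv ℝ g p v
          + f p * fderiv ℝ (fun q => fderiv ℝ g q v) p v) := by
        rw [pd_mul (((hf.pd v).dAt hp)) (hg.dAt hp),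
            pd_mul ((hf.dAt hp)) ((hg.pd v).dAt hp)]
    _ = _ := by ring

lemma eta_pos (σ₀ : ℝ × ℝ → ℝ) {q : ℝ × ℝ} (hq : q ∈ halfPlane) : 0 < eta σ₀ q :=
  mul_pos (pow_pos hq 2) (Real.exp_pos _)

lemma SM_eta {σ₀ : ℝ × ℝ → ℝ} (hσ₀ : SM σ₀) : SM (eta σ₀) :=
  ((contDiff_fst.pow 2).contDiffOn).mul hσ₀.exp

lemma SM_omegaBar {σ₀ ω₁ : ℝ × ℝ → ℝ} (hσ₀ : SM σ₀) (hω₁ : SM ω₁) :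
    SM (omegaBar (eta σ₀) ω₁) :=
  hω₁.div ((SM_eta hσ₀).pow 2) (fun q hq => pow_ne_zero 2 (eta_pos σ₀ hq).ne')

lemma omegaBar_spec {σ₀ ω₁ : ℝ × ℝ → ℝ} :
    ∀ q ∈ halfPlane, ω₁ q
      = (eta σ₀ q * eta σ₀ q) * omegaBar (eta σ₀) ω₁ q := by
  intro q hq
  have h := (eta_pos σ₀ hq).ne'
  simp only [omegaBar]
  field_simp

/-- second derivative of `q.1 ^ 2` -/
lemma pd2_sq_fst {p : ℝ × ℝ} (hp : p ∈ halfPlane) (v : ℝ × ℝ) :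
    fderiv ℝ (fun q => fderiv ℝ (fun q' : ℝ × ℝ => q'.1 ^ 2) q v) p v
      = 2 * v.1 * v.1 := by
  have h1 : ∀ q ∈ halfPlane, (fun q => fderiv ℝ (fun q' : ℝ × ℝ => q'.1 ^ 2) q v) q
      = (fun q : ℝ × ℝ => (2 * v.1) * q.1) q := by
    intro q hq; simpa [mul_comm, mul_assoc, mul_left_comm] using (pd_sq_fst (p := q) (v := v))
  rw [pd_congr h1 hp]
  have h : HasFDerivAt (fun q : ℝ × ℝ => (2 * v.1) * q.1)
      ((2 * v.1) • ContinuousLinearMap.fst ℝ ℝ ℝ) p :=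
    (hasFDerivAt_fst (p := p)).const_mul (2 * v.1)
  rw [h.fderiv]; simp

/-- first derivative of `eta σ₀` on the half plane -/
lemma eta_d1 {σ₀ : ℝ × ℝ → ℝ} (hσ₀ : SM σ₀) :
    ∀ q ∈ halfPlane, ∀ v, fderiv ℝ (eta σ₀) q v
      = 2 * q.1 * v.1 * Real.exp (σ₀ q)
        + q.1 ^ 2 * Real.exp (σ₀ q) * fderiv ℝ σ₀ q v := by
  intro q hq v
  have h := pd_mul_on (F := eta σ₀) (f := fun q : ℝ × ℝ => q.1 ^ 2)
    (g := fun q => Real.exp (σ₀ q)) (fun q _ => rfl)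
    ((contDiff_fst.pow 2).contDiffOn) hσ₀.exp q hq v
  rw [h, pd_sq_fst, pd_exp (hσ₀.dAt hq)]
  ring

/-- second derivative of `exp (σ₀ ·)` -/
lemma exp_d2 {σ₀ : ℝ × ℝ → ℝ} (hσ₀ : SM σ₀) {p : ℝ × ℝ} (hp : p ∈ halfPlane) (v : ℝ × ℝ) :
    fderiv ℝ (fun q => fderiv ℝ (fun q' => Real.exp (σ₀ q')) q v) p v
      = Real.exp (σ₀ p) * ((fderiv ℝ σ₀ p v) ^ 2
          + fderiv ℝ (fun q => fderiv ℝ σ₀ q v) p v) := by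
  have h1 : ∀ q ∈ halfPlane, (fun q => fderiv ℝ (fun q' => Real.exp (σ₀ q')) q v) q
      = (fun q => Real.exp (σ₀ q) * fderiv ℝ σ₀ q v) q := by
    intro q hq; exact pd_exp (hσ₀.dAt hq)
  rw [pd_congr h1 hp]
  calc fderiv ℝ (fun q => Real.exp (σ₀ q) * fderiv ℝ σ₀ q v) p v
      = fderiv ℝ (fun q => Real.exp (σ₀ q)) p v * fderiv ℝ σ₀ p v
        + Real.exp (σ₀ p) * fderiv ℝ (fun q => fderiv ℝ σ₀ q v) p v :=
      pd_mul (SM.dAt hσ₀.exp hp) (SM.dAt (SM.pd hσ₀ v) hp)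
    _ = _ := by rw [pd_exp (hσ₀.dAt hp)]; ring

/-- second derivative of `eta σ₀` -/
lemma eta_d2 {σ₀ : ℝ × ℝ → ℝ} (hσ₀ : SM σ₀) {p : ℝ × ℝ} (hp : p ∈ halfPlane) (v : ℝ × ℝ) :
    fderiv ℝ (fun q => fderiv ℝ (eta σ₀) q v) p v
      = Real.exp (σ₀ p) * (2 * v.1 ^ 2 + 4 * p.1 * v.1 * fderiv ℝ σ₀ p v
          + p.1 ^ 2 * (fderiv ℝ σ₀ p v) ^ 2
          + p.1 ^ 2 * fderiv ℝ (fun q => fderiv ℝ σ₀ q v) p v) := by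
  have h := pd2_mul_on (F := eta σ₀) (f := fun q : ℝ × ℝ => q.1 ^ 2)
    (g := fun q => Real.exp (σ₀ q)) (fun q _ => rfl)
    ((contDiff_fst.pow 2).contDiffOn) hσ₀.exp hp v
  rw [h, pd2_sq_fst hp v, pd_sq_fst, pd_exp (hσ₀.dAt hp), exp_d2 hσ₀ hp v]
  ring

lemma omega1_d1 {σ₀ ω₁ : ℝ × ℝ → ℝ} (hσ₀ : SM σ₀) (hω₁ : SM ω₁) :
    ∀ q ∈ halfPlane, ∀ v, fderiv ℝ ω₁ q v
      = 2 * eta σ₀ q * fderiv ℝ (eta σ₀) q v * omegaBar (eta σ₀) ω₁ q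
        + (eta σ₀ q) ^ 2 * fderiv ℝ (omegaBar (eta σ₀) ω₁) q v := by
  intro q hq v
  have hη := SM_eta hσ₀
  have hw := SM_omegaBar hσ₀ hω₁
  have h := pd_mul_on (F := ω₁) (f := fun q => eta σ₀ q * eta σ₀ q)
    (g := omegaBar (eta σ₀) ω₁) omegaBar_spec (hη.mul hη) hw q hq v
  have h2 := pd_mul_on (F := fun q => eta σ₀ q * eta σ₀ q) (f := eta σ₀)
    (g := eta σ₀) (fun q _ => rfl) hη hη q hq v
  rw [h, h2]; ring

lemma omega1_d2 {σ₀ ω₁ : ℝ × ℝ → ℝ} (hσ₀ : SM σ₀) (hω₁ : SM ω₁)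
    {p : ℝ × ℝ} (hp : p ∈ halfPlane) (v : ℝ × ℝ) :
    fderiv ℝ (fun q => fderiv ℝ ω₁ q v) p v
      = (2 * (fderiv ℝ (eta σ₀) p v) ^ 2
          + 2 * eta σ₀ p * fderiv ℝ (fun q => fderiv ℝ (eta σ₀) q v) p v)
            * omegaBar (eta σ₀) ω₁ p
        + 4 * eta σ₀ p * fderiv ℝ (eta σ₀) p v
            * fderiv ℝ (omegaBar (eta σ₀) ω₁) p v
        + (eta σ₀ p) ^ 2
            * fderiv ℝ (fun q => fderiv ℝ (omegaBar (eta σ₀) ω₁) q v) p v := by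
  have hη := SM_eta hσ₀
  have hw := SM_omegaBar hσ₀ hω₁
  have h := pd2_mul_on (F := ω₁) (f := fun q => eta σ₀ q * eta σ₀ q)
    (g := omegaBar (eta σ₀) ω₁) omegaBar_spec (hη.mul hη) hw hp v
  have h1 := pd_mul_on (F := fun q => eta σ₀ q * eta σ₀ q) (f := eta σ₀)
    (g := eta σ₀) (fun q _ => rfl) hη hη p hp v
  have h2 := pd2_mul_on (F := fun q => eta σ₀ q * eta σ₀ q) (f := eta σ₀)
    (g := eta σ₀) (fun q _ => rfl) hη hη hp v
  rw [h, h2, h1]; ring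

lemma key_identity {σ₀ ω₁ : ℝ × ℝ → ℝ} (hσ₀ : SM σ₀) (hω₁ : SM ω₁)
    {p : ℝ × ℝ} (hp : p ∈ halfPlane) :
    lap3 ω₁ p = (eta σ₀ p) ^ 2 * lap7 (omegaBar (eta σ₀) ω₁) p
      + 2 * (eta σ₀ p) ^ 2 * gradDot σ₀ (omegaBar (eta σ₀) ω₁) p
      + 2 * omegaBar (eta σ₀) ω₁ p * (eta σ₀ p) ^ 2 * lap3 σ₀ p
      + (4 / p.1) * pdρ ω₁ p + 2 * gradDot ω₁ σ₀ p := by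
  have hρ : (0:ℝ) < p.1 := hp
  have hX : Real.exp (σ₀ p) ≠ 0 := (Real.exp_pos _).ne'
  have hηfact : eta σ₀ p = p.1 ^ 2 * Real.exp (σ₀ p) := rfl
  have upρ : ∀ f : ℝ × ℝ → ℝ, pdρ f = fun q => fderiv ℝ f q (1,0) := fun f => rfl
  have upz : ∀ f : ℝ × ℝ → ℝ, pdz f = fun q => fderiv ℝ f q (0,1) := fun f => rfl
  simp only [lap3, lap7, lap2, gradDot, upρ, upz]
  rw [omega1_d2 hσ₀ hω₁ hp (1,0), omega1_d2 hσ₀ hω₁ hp (0,1),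
      omega1_d1 hσ₀ hω₁ p hp (1,0), omega1_d1 hσ₀ hω₁ p hp (0,1),
      eta_d2 hσ₀ hp (1,0), eta_d2 hσ₀ hp (0,1),
      eta_d1 hσ₀ p hp (1,0), eta_d1 hσ₀ p hp (0,1), hηfact]
  norm_num
  field_simp
  ring

lemma gradDot_sq_le (f g : ℝ × ℝ → ℝ) (p : ℝ × ℝ) :
    (gradDot f g p) ^ 2 ≤ gradSq f p * gradSq g p := by
  simp only [gradDot, gradSq]
  nlinarith [sq_nonneg (pdρ f p * pdz g p - pdz f p * pdρ g p)]

lemma sq2 (x y : ℝ) : (x + y) ^ 2 ≤ 2 * x ^ 2 + 2 * y ^ 2 := by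
  nlinarith [sq_nonneg (x - y)]

lemma sq4 (a b c d : ℝ) : (a + b + c + d) ^ 2
    ≤ 4 * a ^ 2 + 4 * b ^ 2 + 4 * c ^ 2 + 4 * d ^ 2 := by
  nlinarith [sq_nonneg (a - b), sq_nonneg (a - c), sq_nonneg (a - d),
    sq_nonneg (b - c), sq_nonneg (b - d), sq_nonneg (c - d)]

lemma g1_bound (E a1 a2 W w1 w2 : ℝ) :
    (2 * E * a1 * W + E ^ 2 * w1) ^ 2 + (2 * E * a2 * W + E ^ 2 * w2) ^ 2
      ≤ 8 * E ^ 2 * (a1 ^ 2 + a2 ^ 2) * W ^ 2 + 2 * (E ^ 2) ^ 2 * (w1 ^ 2 + w2 ^ 2) := by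
  nlinarith [sq_nonneg (2 * E * a1 * W - E ^ 2 * w1), sq_nonneg (2 * E * a2 * W - E ^ 2 * w2)]

lemma pointwise_bound (C₁ C₂ C₃ : ℝ) (hC₁ : 0 < C₁) (hC₂ : 0 < C₂) (hC₃ : 0 < C₃)
    (E2 e G r2 g0 gw gE gs0 gs1 g1 T1 W L3 L7 Pv Dv s1 d10 d01 dsw m2 : ℝ)
    (hG : 0 < G) (he : 0 < e) (hE2 : 0 < E2) (hee : e * E2 = 1) (hr2 : 0 < r2)
    (hg0 : 0 ≤ g0) (hgw : 0 ≤ gw) (hgE : 0 ≤ gE) (hgs0 : 0 ≤ gs0) (hgs1 : 0 ≤ gs1)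
    (hg1nn : 0 ≤ g1)
    (hT1 : T1 * r2 = s1 ^ 2) (hb1 : g0 * r2 ≤ C₁ * G) (hb2 : e * g0 ≤ C₂ * G)
    (hb3 : e * gs0 ≤ C₃)
    (hQ : G * L3 = G * (E2 * Pv) + 2 * (s1 * g0 - d10))
    (hS : G * L7 = E2 * Dv + 2 * d01 - 2 * G * dsw + 2 * W * g0)
    (hd10 : d10 ^ 2 ≤ g1 * g0) (hd01 : d01 ^ 2 ≤ g0 * gs1) (hdsw : dsw ^ 2 ≤ gs0 * gw)
    (hg1b : g1 ≤ 8 * G * gE * W ^ 2 + 2 * G ^ 2 * gw)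
    (hm2 : m2 * G = E2 * Dv ^ 2) (hm2nn : 0 ≤ m2) :
    L3 ^ 2 * e + G * L7 ^ 2 * e
      ≤ (16 * C₁ * C₂ + 160 * C₂ + 16 * C₃ + 4)
          * (T1 + gE * W ^ 2 + G * gw + gs1 + g0 * W ^ 2 + (E2 * Pv ^ 2 + m2)) := by
  have hT1nn : 0 ≤ T1 := by
    have h0 : 0 ≤ r2 * T1 := by rw [mul_comm]; exact hT1 ▸ sq_nonneg s1
    exact nonneg_of_mul_nonneg_right h0 hr2
  -- A part
  have k1 : (G * L3) ^ 2 * e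
      ≤ (2 * (G * (E2 * Pv)) ^ 2 + 2 * (2 * (s1 * g0 - d10)) ^ 2) * e := by
    apply mul_le_mul_of_nonneg_right _ he.le
    rw [hQ]; exact sq2 _ _
  have k2 : (G * (E2 * Pv)) ^ 2 * e = G ^ 2 * (E2 * Pv ^ 2) := by
    linear_combination G ^ 2 * E2 * Pv ^ 2 * hee
  have k3 : (2 * (s1 * g0 - d10)) ^ 2 ≤ 8 * (s1 * g0) ^ 2 + 8 * d10 ^ 2 := by
    have h := sq2 (2 * (s1 * g0)) (-(2 * d10))
    linarith [h]
  have k4a : s1 ^ 2 * g0 ≤ C₁ * G * T1 := by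
    have h1 := mul_le_mul_of_nonneg_left hb1 hT1nn
    have h2 : s1 ^ 2 * g0 = T1 * (g0 * r2) := by rw [← hT1]; ring
    linarith [h1, h2]
  have k4 : (s1 * g0) ^ 2 * e ≤ C₁ * C₂ * G ^ 2 * T1 := by
    have h1 : (s1 ^ 2 * g0) * (e * g0) ≤ (C₁ * G * T1) * (C₂ * G) :=
      mul_le_mul k4a hb2 (mul_nonneg he.le hg0) (by positivity)
    have h2 : (s1 * g0) ^ 2 * e = (s1 ^ 2 * g0) * (e * g0) := by ring
    linarith [h1, h2]
  have k5 : d10 ^ 2 * e ≤ C₂ * G * g1 := by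
    have h1 : d10 ^ 2 * e ≤ (g1 * g0) * e := mul_le_mul_of_nonneg_right hd10 he.le
    have h2 : g1 * (e * g0) ≤ g1 * (C₂ * G) := mul_le_mul_of_nonneg_left hb2 hg1nn
    linarith [h1, h2]
  have k6 : C₂ * G * g1 ≤ 8 * C₂ * G ^ 2 * gE * W ^ 2 + 2 * C₂ * G ^ 3 * gw := by
    have h1 := mul_le_mul_of_nonneg_left hg1b (by positivity : (0:ℝ) ≤ C₂ * G)
    linarith [h1]
  have hA' : (G * L3) ^ 2 * e
      ≤ G ^ 2 * (2 * (E2 * Pv ^ 2) + 16 * C₁ * C₂ * T1 + 32 * C₂ * (G * gw)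
          + 128 * C₂ * (gE * W ^ 2)) := by
    have k35 := mul_le_mul_of_nonneg_right k3 he.le
    linarith [k1, k2, k35, k4, k5, k6]
  have hA : L3 ^ 2 * e ≤ 2 * (E2 * Pv ^ 2) + 16 * C₁ * C₂ * T1 + 32 * C₂ * (G * gw)
      + 128 * C₂ * (gE * W ^ 2) := by
    have h : G ^ 2 * (L3 ^ 2 * e) ≤ G ^ 2 * (2 * (E2 * Pv ^ 2) + 16 * C₁ * C₂ * T1
        + 32 * C₂ * (G * gw) + 128 * C₂ * (gE * W ^ 2)) := by linarith [hA']
    exact le_of_mul_le_mul_left h (by positivity)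
  -- B part
  have j1 : (G * L7) ^ 2 * e
      ≤ (4 * (E2 * Dv) ^ 2 + 4 * (2 * d01) ^ 2 + 4 * (2 * G * dsw) ^ 2
          + 4 * (2 * W * g0) ^ 2) * e := by
    apply mul_le_mul_of_nonneg_right _ he.le
    rw [hS]
    have h := sq4 (E2 * Dv) (2 * d01) (-(2 * G * dsw)) (2 * W * g0)
    linarith [h]
  have j2 : (E2 * Dv) ^ 2 * e = G * m2 := by
    linear_combination E2 * Dv ^ 2 * hee - hm2
  have j3 : (2 * d01) ^ 2 * e ≤ 4 * C₂ * G * gs1 := by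
    have h1 : d01 ^ 2 * e ≤ (g0 * gs1) * e := mul_le_mul_of_nonneg_right hd01 he.le
    have h2 : gs1 * (e * g0) ≤ gs1 * (C₂ * G) := mul_le_mul_of_nonneg_left hb2 hgs1
    linarith [h1, h2]
  have j4 : (2 * G * dsw) ^ 2 * e ≤ 4 * C₃ * G ^ 2 * gw := by
    have h1 : dsw ^ 2 * e ≤ (gs0 * gw) * e := mul_le_mul_of_nonneg_right hdsw he.le
    have h2 : gw * (e * gs0) ≤ gw * C₃ := mul_le_mul_of_nonneg_left hb3 hgw
    have h3 : dsw ^ 2 * e ≤ C₃ * gw := by linarith [h1, h2]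
    have h4 := mul_le_mul_of_nonneg_left h3 (by positivity : (0:ℝ) ≤ 4 * G ^ 2)
    linarith [h4]
  have j5 : (2 * W * g0) ^ 2 * e ≤ 4 * C₂ * G * (g0 * W ^ 2) := by
    have h1 : (W ^ 2 * g0) * (e * g0) ≤ (W ^ 2 * g0) * (C₂ * G) :=
      mul_le_mul_of_nonneg_left hb2 (by positivity)
    linarith [h1]
  have hB' : (G * L7) ^ 2 * e
      ≤ G * (4 * m2 + 16 * C₂ * gs1 + 16 * C₃ * (G * gw) + 16 * C₂ * (g0 * W ^ 2)) := by
    linarith [j1, j2, j3, j4, j5]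
  have hB : G * L7 ^ 2 * e
      ≤ 4 * m2 + 16 * C₂ * gs1 + 16 * C₃ * (G * gw) + 16 * C₂ * (g0 * W ^ 2) := by
    have h : G * (G * L7 ^ 2 * e) ≤ G * (4 * m2 + 16 * C₂ * gs1 + 16 * C₃ * (G * gw)
        + 16 * C₂ * (g0 * W ^ 2)) := by linarith [hB']
    exact le_of_mul_le_mul_left h hG
  -- combine
  linarith [hA, hB, mul_nonneg (mul_nonneg hC₁.le hC₂.le) hT1nn,
    mul_nonneg hC₂.le hT1nn, mul_nonneg hC₃.le hT1nn,
    mul_nonneg hC₂.le (mul_nonneg hgE (sq_nonneg W)),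
    mul_nonneg hC₃.le (mul_nonneg hgE (sq_nonneg W)),
    mul_nonneg (mul_nonneg hC₁.le hC₂.le) (mul_nonneg hgE (sq_nonneg W)),
    mul_nonneg hC₂.le (mul_nonneg hG.le hgw),
    mul_nonneg hC₃.le (mul_nonneg hG.le hgw),
    mul_nonneg (mul_nonneg hC₁.le hC₂.le) (mul_nonneg hG.le hgw),
    mul_nonneg hC₂.le hgs1, mul_nonneg hC₃.le hgs1,
    mul_nonneg (mul_nonneg hC₁.le hC₂.le) hgs1,
    mul_nonneg hC₂.le (mul_nonneg hg0 (sq_nonneg W)),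
    mul_nonneg hC₃.le (mul_nonneg hg0 (sq_nonneg W)),
    mul_nonneg (mul_nonneg hC₁.le hC₂.le) (mul_nonneg hg0 (sq_nonneg W)),
    mul_nonneg hC₂.le (mul_nonneg hE2.le (sq_nonneg Pv)),
    mul_nonneg hC₃.le (mul_nonneg hE2.le (sq_nonneg Pv)),
    mul_nonneg (mul_nonneg hC₁.le hC₂.le) (mul_nonneg hE2.le (sq_nonneg Pv)),
    mul_nonneg hC₂.le hm2nn, mul_nonneg hC₃.le hm2nn,
    mul_nonneg (mul_nonneg hC₁.le hC₂.le) hm2nn,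
    mul_nonneg hE2.le (sq_nonneg Pv), hT1nn,
    mul_nonneg hgE (sq_nonneg W), mul_nonneg hG.le hgw,
    mul_nonneg hg0 (sq_nonneg W)]

set_option maxHeartbeats 2000000

theorem second_order_integral_estimate
    (C₁ C₂ C₃ : ℝ) (hC₁ : 0 < C₁) (hC₂ : 0 < C₂) (hC₃ : 0 < C₃) :
    ∃ C : ℝ, 0 < C ∧
      ∀ σ₀ q₀ ω₀ σ₁ ω₁ P D : ℝ × ℝ → ℝ,
        ContDiffOn ℝ (⊤ : ℕ∞) σ₀ halfPlane → ContDiffOn ℝ (⊤ : ℕ∞) q₀ halfPlane →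
        ContDiffOn ℝ (⊤ : ℕ∞) ω₀ halfPlane → ContDiffOn ℝ (⊤ : ℕ∞) σ₁ halfPlane →
        ContDiffOn ℝ (⊤ : ℕ∞) ω₁ halfPlane → ContDiffOn ℝ (⊤ : ℕ∞) P halfPlane →
        ContDiffOn ℝ (⊤ : ℕ∞) D halfPlane →
        (∀ p ∈ halfPlane, lap3 σ₀ p = - (gradSq ω₀ p / (eta σ₀ p) ^ 2)) →
        (∀ p ∈ halfPlane,
          lap3 σ₁ p = Real.exp (2 * (σ₀ p + q₀ p)) * P p
            + (2 / (eta σ₀ p) ^ 2) * (σ₁ p * gradSq ω₀ p - gradDot ω₁ ω₀ p)) →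
        (∀ p ∈ halfPlane,
          lap3 ω₁ p = Real.exp (2 * (σ₀ p + q₀ p)) * D p + (4 / p.1) * pdρ ω₁ p
            + 2 * gradDot ω₁ σ₀ p + 2 * gradDot ω₀ σ₁ p) →
        (∀ p ∈ halfPlane, gradSq ω₀ p / (eta σ₀ p) ^ 2 ≤ C₁ / (rr p) ^ 2) →
        (∀ p ∈ halfPlane,
          Real.exp (-2 * (σ₀ p + q₀ p)) * (gradSq ω₀ p / (eta σ₀ p) ^ 2) ≤ C₂) →
        (∀ p ∈ halfPlane, Real.exp (-2 * (σ₀ p + q₀ p)) * gradSq σ₀ p ≤ C₃) →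
        ∀ M Mbar : ℝ, 0 < M → 0 < Mbar →
        (∫ p in halfPlane,
            ((σ₁ p) ^ 2 / (rr p) ^ 2
              + gradSq (eta σ₀) p * (omegaBar (eta σ₀) ω₁ p) ^ 2
              + (eta σ₀ p) ^ 2 * gradSq (omegaBar (eta σ₀) ω₁) p
              + gradSq σ₁ p
              + gradSq ω₀ p * (omegaBar (eta σ₀) ω₁ p) ^ 2) * p.1) ≤ M →
        (∫ p in halfPlane,
            (Real.exp (2 * (σ₀ p + q₀ p)) * (P p) ^ 2
              + (Real.exp (2 * (σ₀ p + q₀ p)) / (eta σ₀ p) ^ 2) * (D p) ^ 2) * p.1)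
          ≤ Mbar →
        IntegrableOn (fun p =>
          ((σ₁ p) ^ 2 / (rr p) ^ 2
            + gradSq (eta σ₀) p * (omegaBar (eta σ₀) ω₁ p) ^ 2
            + (eta σ₀ p) ^ 2 * gradSq (omegaBar (eta σ₀) ω₁) p
            + gradSq σ₁ p
            + gradSq ω₀ p * (omegaBar (eta σ₀) ω₁ p) ^ 2) * p.1) halfPlane →
        IntegrableOn (fun p =>
          (Real.exp (2 * (σ₀ p + q₀ p)) * (P p) ^ 2
            + (Real.exp (2 * (σ₀ p + q₀ p)) / (eta σ₀ p) ^ 2) * (D p) ^ 2) * p.1)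
          halfPlane →
        IntegrableOn (fun p =>
          (lap3 σ₁ p) ^ 2 * Real.exp (-2 * (σ₀ p + q₀ p)) * p.1) halfPlane →
        IntegrableOn (fun p =>
          (eta σ₀ p) ^ 2 * (lap7 (omegaBar (eta σ₀) ω₁) p) ^ 2 *
            Real.exp (-2 * (σ₀ p + q₀ p)) * p.1) halfPlane →
        (∫ p in halfPlane,
            ((lap3 σ₁ p) ^ 2
              + (eta σ₀ p) ^ 2 * (lap7 (omegaBar (eta σ₀) ω₁) p) ^ 2) *
              Real.exp (-2 * (σ₀ p + q₀ p)) * p.1) ≤ C * (M + Mbar) := by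
  refine ⟨16 * C₁ * C₂ + 160 * C₂ + 16 * C₃ + 4, by positivity, ?_⟩
  intro σ₀ q₀ ω₀ σ₁ ω₁ P D hσ₀ hq₀ hω₀ hσ₁ hω₁ hP hD heq0 heq1 heq2 hb1 hb2 hb3
    M Mbar hM hMbar hIM hIMbar hintM hintMbar hint3 hint4
  have hCcpos : (0:ℝ) < 16 * C₁ * C₂ + 160 * C₂ + 16 * C₃ + 4 := by positivity
  -- pointwise bound
  have hpt : ∀ p ∈ halfPlane,
      ((lap3 σ₁ p) ^ 2 + (eta σ₀ p) ^ 2 * (lap7 (omegaBar (eta σ₀) ω₁) p) ^ 2) *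
          Real.exp (-2 * (σ₀ p + q₀ p)) * p.1
        ≤ (16 * C₁ * C₂ + 160 * C₂ + 16 * C₃ + 4) * (((σ₁ p) ^ 2 / (rr p) ^ 2
              + gradSq (eta σ₀) p * (omegaBar (eta σ₀) ω₁ p) ^ 2
              + (eta σ₀ p) ^ 2 * gradSq (omegaBar (eta σ₀) ω₁) p
              + gradSq σ₁ p
              + gradSq ω₀ p * (omegaBar (eta σ₀) ω₁ p) ^ 2) * p.1
            + (Real.exp (2 * (σ₀ p + q₀ p)) * (P p) ^ 2
              + (Real.exp (2 * (σ₀ p + q₀ p)) / (eta σ₀ p) ^ 2) * (D p) ^ 2) * p.1) := by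
    intro p hp
    have hρ : (0:ℝ) < p.1 := hp
    have hE : 0 < eta σ₀ p := eta_pos σ₀ hp
    have hG : 0 < (eta σ₀ p) ^ 2 := by positivity
    have he : 0 < Real.exp (-2 * (σ₀ p + q₀ p)) := Real.exp_pos _
    have hE2 : 0 < Real.exp (2 * (σ₀ p + q₀ p)) := Real.exp_pos _
    have hee : Real.exp (-2 * (σ₀ p + q₀ p)) * Real.exp (2 * (σ₀ p + q₀ p)) = 1 := by
      rw [← Real.exp_add]; norm_num
    have hrr : (rr p) ^ 2 = p.1 ^ 2 + p.2 ^ 2 := Real.sq_sqrt (by positivity)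
    have hr2 : 0 < (rr p) ^ 2 := by rw [hrr]; positivity
    have hT1 : (σ₁ p) ^ 2 / (rr p) ^ 2 * (rr p) ^ 2 = (σ₁ p) ^ 2 :=
      div_mul_cancel₀ _ hr2.ne'
    -- bounds in multiplied form
    have hb1m : gradSq ω₀ p * (rr p) ^ 2 ≤ C₁ * (eta σ₀ p) ^ 2 :=
      (div_le_div_iff₀ hG hr2).mp (hb1 p hp)
    have hb2m : Real.exp (-2 * (σ₀ p + q₀ p)) * gradSq ω₀ p ≤ C₂ * (eta σ₀ p) ^ 2 := by
      have h := hb2 p hp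
      rw [mul_div_assoc'] at h
      exact (div_le_iff₀ hG).mp h
    have hb3m := hb3 p hp
    -- equation for σ₁
    have hQ : (eta σ₀ p) ^ 2 * lap3 σ₁ p
        = (eta σ₀ p) ^ 2 * (Real.exp (2 * (σ₀ p + q₀ p)) * P p)
          + 2 * (σ₁ p * gradSq ω₀ p - gradDot ω₁ ω₀ p) := by
      rw [heq1 p hp]; field_simp
    -- equation for ω̄₁
    have hS : (eta σ₀ p) ^ 2 * lap7 (omegaBar (eta σ₀) ω₁) p
        = Real.exp (2 * (σ₀ p + q₀ p)) * D p + 2 * gradDot ω₀ σ₁ p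
          - 2 * (eta σ₀ p) ^ 2 * gradDot σ₀ (omegaBar (eta σ₀) ω₁) p
          + 2 * omegaBar (eta σ₀) ω₁ p * gradSq ω₀ p := by
      have hk := key_identity hσ₀ hω₁ hp
      have h2 := heq2 p hp
      have h0 := heq0 p hp
      rw [h0] at hk
      have hcan : 2 * omegaBar (eta σ₀) ω₁ p * (eta σ₀ p) ^ 2
          * (-(gradSq ω₀ p / (eta σ₀ p) ^ 2))
          = -(2 * omegaBar (eta σ₀) ω₁ p * gradSq ω₀ p) := by
        field_simp
      have h3 := hk.symm.trans h2
      linarith [h3, hcan]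
    -- gradient of ω₁ in terms of ω̄₁
    have hg1b : gradSq ω₁ p
        ≤ 8 * (eta σ₀ p) ^ 2 * gradSq (eta σ₀) p * (omegaBar (eta σ₀) ω₁ p) ^ 2
          + 2 * ((eta σ₀ p) ^ 2) ^ 2 * gradSq (omegaBar (eta σ₀) ω₁) p := by
      have o1 := omega1_d1 hσ₀ hω₁ p hp (1, 0)
      have o2 := omega1_d1 hσ₀ hω₁ p hp (0, 1)
      have hgs : gradSq ω₁ p = (fderiv ℝ ω₁ p (1, 0)) ^ 2 + (fderiv ℝ ω₁ p (0, 1)) ^ 2 := rfl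
      have hgse : gradSq (eta σ₀) p
          = (fderiv ℝ (eta σ₀) p (1, 0)) ^ 2 + (fderiv ℝ (eta σ₀) p (0, 1)) ^ 2 := rfl
      have hgsw : gradSq (omegaBar (eta σ₀) ω₁) p
          = (fderiv ℝ (omegaBar (eta σ₀) ω₁) p (1, 0)) ^ 2
            + (fderiv ℝ (omegaBar (eta σ₀) ω₁) p (0, 1)) ^ 2 := rfl
      rw [hgs, o1, o2, hgse, hgsw]
      exact g1_bound _ _ _ _ _ _
    have hm2 : (Real.exp (2 * (σ₀ p + q₀ p)) / (eta σ₀ p) ^ 2 * (D p) ^ 2)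
        * (eta σ₀ p) ^ 2 = Real.exp (2 * (σ₀ p + q₀ p)) * (D p) ^ 2 := by
      field_simp
    have main := pointwise_bound C₁ C₂ C₃ hC₁ hC₂ hC₃
      (Real.exp (2 * (σ₀ p + q₀ p))) (Real.exp (-2 * (σ₀ p + q₀ p)))
      ((eta σ₀ p) ^ 2) ((rr p) ^ 2) (gradSq ω₀ p)
      (gradSq (omegaBar (eta σ₀) ω₁) p) (gradSq (eta σ₀) p) (gradSq σ₀ p)
      (gradSq σ₁ p) (gradSq ω₁ p) ((σ₁ p) ^ 2 / (rr p) ^ 2)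
      (omegaBar (eta σ₀) ω₁ p) (lap3 σ₁ p) (lap7 (omegaBar (eta σ₀) ω₁) p)
      (P p) (D p) (σ₁ p) (gradDot ω₁ ω₀ p) (gradDot ω₀ σ₁ p)
      (gradDot σ₀ (omegaBar (eta σ₀) ω₁) p)
      (Real.exp (2 * (σ₀ p + q₀ p)) / (eta σ₀ p) ^ 2 * (D p) ^ 2)
      hG he hE2 hee hr2
      (by unfold gradSq; positivity) (by unfold gradSq; positivity)
      (by unfold gradSq; positivity) (by unfold gradSq; positivity)
      (by unfold gradSq; positivity) (by unfold gradSq; positivity)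
      hT1 hb1m hb2m hb3m hQ hS
      (gradDot_sq_le ω₁ ω₀ p) (gradDot_sq_le ω₀ σ₁ p)
      (gradDot_sq_le σ₀ (omegaBar (eta σ₀) ω₁) p)
      (by linarith [hg1b]) hm2 (by positivity)
    have hmul := mul_le_mul_of_nonneg_right main hρ.le
    linarith [hmul]
  -- integration
  have hmeas : MeasurableSet halfPlane := hp_isOpen.measurableSet
  have hL : IntegrableOn (fun p =>
      ((lap3 σ₁ p) ^ 2 + (eta σ₀ p) ^ 2 * (lap7 (omegaBar (eta σ₀) ω₁) p) ^ 2) *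
        Real.exp (-2 * (σ₀ p + q₀ p)) * p.1) halfPlane := by
    have h := hint3.add hint4
    have heqf : (fun p =>
        ((lap3 σ₁ p) ^ 2 + (eta σ₀ p) ^ 2 * (lap7 (omegaBar (eta σ₀) ω₁) p) ^ 2) *
          Real.exp (-2 * (σ₀ p + q₀ p)) * p.1)
        = (fun p => (lap3 σ₁ p) ^ 2 * Real.exp (-2 * (σ₀ p + q₀ p)) * p.1
            + (eta σ₀ p) ^ 2 * (lap7 (omegaBar (eta σ₀) ω₁) p) ^ 2 *
              Real.exp (-2 * (σ₀ p + q₀ p)) * p.1) := by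
      funext p; ring
    rw [heqf]; exact h
  have hR : IntegrableOn (fun p =>
      (16 * C₁ * C₂ + 160 * C₂ + 16 * C₃ + 4) * (((σ₁ p) ^ 2 / (rr p) ^ 2
          + gradSq (eta σ₀) p * (omegaBar (eta σ₀) ω₁ p) ^ 2
          + (eta σ₀ p) ^ 2 * gradSq (omegaBar (eta σ₀) ω₁) p
          + gradSq σ₁ p
          + gradSq ω₀ p * (omegaBar (eta σ₀) ω₁ p) ^ 2) * p.1
        + (Real.exp (2 * (σ₀ p + q₀ p)) * (P p) ^ 2
          + (Real.exp (2 * (σ₀ p + q₀ p)) / (eta σ₀ p) ^ 2) * (D p) ^ 2) * p.1))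
      halfPlane := (hintM.add hintMbar).const_mul _
  calc ∫ p in halfPlane,
        ((lap3 σ₁ p) ^ 2 + (eta σ₀ p) ^ 2 * (lap7 (omegaBar (eta σ₀) ω₁) p) ^ 2) *
          Real.exp (-2 * (σ₀ p + q₀ p)) * p.1
      ≤ ∫ p in halfPlane, (16 * C₁ * C₂ + 160 * C₂ + 16 * C₃ + 4) * (((σ₁ p) ^ 2 / (rr p) ^ 2
            + gradSq (eta σ₀) p * (omegaBar (eta σ₀) ω₁ p) ^ 2
            + (eta σ₀ p) ^ 2 * gradSq (omegaBar (eta σ₀) ω₁) p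
            + gradSq σ₁ p
            + gradSq ω₀ p * (omegaBar (eta σ₀) ω₁ p) ^ 2) * p.1
          + (Real.exp (2 * (σ₀ p + q₀ p)) * (P p) ^ 2
            + (Real.exp (2 * (σ₀ p + q₀ p)) / (eta σ₀ p) ^ 2) * (D p) ^ 2) * p.1) :=
      setIntegral_mono_on hL hR hmeas hpt
    _ = (16 * C₁ * C₂ + 160 * C₂ + 16 * C₃ + 4) * ((∫ p in halfPlane, ((σ₁ p) ^ 2 / (rr p) ^ 2
            + gradSq (eta σ₀) p * (omegaBar (eta σ₀) ω₁ p) ^ 2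
            + (eta σ₀ p) ^ 2 * gradSq (omegaBar (eta σ₀) ω₁) p
            + gradSq σ₁ p
            + gradSq ω₀ p * (omegaBar (eta σ₀) ω₁ p) ^ 2) * p.1)
          + (∫ p in halfPlane, (Real.exp (2 * (σ₀ p + q₀ p)) * (P p) ^ 2
            + (Real.exp (2 * (σ₀ p + q₀ p)) / (eta σ₀ p) ^ 2) * (D p) ^ 2) * p.1)) := by
        rw [integral_const_mul, integral_add hintM hintMbar]
    _ ≤ (16 * C₁ * C₂ + 160 * C₂ + 16 * C₃ + 4) * (M + Mbar) := by
        apply mul_le_mul_of_nonneg_left _ hCcpos.le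
        exact add_le_add hIM hIMbar
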